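/- arXiv:2112.15058 — 6 statements merged into one kernel-verified Lean document; each statement's English description precedes it below -/
import Mathlib

section
/- Let G be a group with a distinguished element τ and write var(x) = [τ,x]. Let x, y ∈ C₂(τ). Then var(x) and var(y⁻¹) commute (var(x)·var(y⁻¹) = var(y⁻¹)·var(x)) if and only if the product xy belongs to C₂(τ), i.e. [τ,[τ,xy]] = 1. -/
/-- The τ-functional variation in a group: `var τ x = τ⁻¹ * x⁻¹ * τ * x = [τ, x]`. -/
def tauVar {G : Type*} [Group G] (τ x : G) : G := τ⁻¹ * x⁻¹ * τ * x

private lemma tauVar_eq_one_iff' {G : Type*} [Group G] (τ a : G) :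
    tauVar τ a = 1 ↔ τ * a = a * τ := by
  unfold tauVar
  constructor
  · intro h
    have h2 := congrArg (fun z => a * τ * z) h
    simpa [mul_assoc] using h2
  · intro h
    simp [mul_assoc, h]

/-- For `x, y ∈ C₂(τ)`, the elements `var(x)` and `var(y⁻¹)` commute if and only if
`xy ∈ C₂(τ)`, i.e. `[τ,[τ,xy]] = 1`. -/
theorem tauVar_commute_iff_mul_mem_C2 {G : Type*} [Group G] (τ x y : G)
    (hx : tauVar τ (tauVar τ x) = 1) (hy : tauVar τ (tauVar τ y) = 1) :
    tauVar τ x * tauVar τ y⁻¹ = tauVar τ y⁻¹ * tauVar τ x ↔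
      tauVar τ (tauVar τ (x * y)) = 1 := by
  have hxa : Commute τ (tauVar τ x) := (tauVar_eq_one_iff' τ _).1 hx
  have hyb : Commute τ (tauVar τ y) := (tauVar_eq_one_iff' τ _).1 hy
  have f1 : tauVar τ (x * y) = tauVar τ y * (y⁻¹ * tauVar τ x * y) := by
    unfold tauVar; group
  have f3 : τ * tauVar τ y⁻¹ = y * τ * y⁻¹ := by
    unfold tauVar; group
  rw [tauVar_eq_one_iff' τ _, f1]
  set a := tauVar τ x with ha
  set b := tauVar τ y with hb
  set c := tauVar τ y⁻¹ with hc
  show a * c = c * a ↔ Commute τ (b * (y⁻¹ * a * y))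
  have i1 : Commute τ (b * (y⁻¹ * a * y)) ↔ Commute τ (y⁻¹ * a * y) := by
    constructor
    · intro H
      have := hyb.inv_right.mul_right H
      simpa [← mul_assoc] using this
    · exact fun H => hyb.mul_right H
  have e1 : y⁻¹ * (τ * c) * (y⁻¹)⁻¹ = τ := by rw [f3]; group
  have e2 : y⁻¹ * a * (y⁻¹)⁻¹ = y⁻¹ * a * y := by group
  have i2 := Commute.conj_iff (a := τ * c) (b := a) y⁻¹
  rw [e1, e2] at i2
  have i3 : Commute (τ * c) a ↔ Commute c a := by
    constructor
    · intro H
      have := (hxa.inv_left).mul_left H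
      simpa [← mul_assoc] using this
    · exact fun H => hxa.mul_left H
  rw [i1, i2, i3]
  exact ⟨fun h => Eq.symm h, fun h => Eq.symm h⟩
end

section
/- Let G be a group with a distinguished element τ and write var(x) = [τ,x]. Let x, y ∈ C₂(τ). Then the two relations var(x) = var(y) and var(x⁻¹) = var(y⁻¹) hold simultaneously if and only if y = c·x for some element c ∈ C₁(τ) which commutes with var(x⁻¹). -/
/-- For `x, y ∈ C₂(τ)`: `var(x) = var(y)` and `var(x⁻¹) = var(y⁻¹)` hold simultaneously
if and only if `y = c * x` for some `c ∈ C₁(τ)` commuting with `var(x⁻¹)`. -/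
theorem tauVar_equal_vars_iff {G : Type*} [Group G] (τ x y : G)
    (hx : tauVar τ (tauVar τ x) = 1) (hy : tauVar τ (tauVar τ y) = 1) :
    (tauVar τ x = tauVar τ y ∧ tauVar τ x⁻¹ = tauVar τ y⁻¹) ↔
      ∃ c : G, c * τ = τ * c ∧ c * tauVar τ x⁻¹ = tauVar τ x⁻¹ * c ∧ y = c * x := by
  simp only [tauVar] at *
  constructor
  · rintro ⟨h1, h2⟩
    have e1 : x⁻¹ * τ * x = y⁻¹ * τ * y := by
      have := congrArg (fun z => τ * z) h1
      simpa [mul_assoc] using this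
    have e2 : x * τ * x⁻¹ = y * τ * y⁻¹ := by
      have := congrArg (fun z => τ * z) h2
      simpa [mul_assoc] using this
    have hc : y * x⁻¹ * τ = τ * (y * x⁻¹) := by
      have := congrArg (fun z => y * z * x⁻¹) e1
      simpa [mul_assoc] using this
    refine ⟨y * x⁻¹, hc, ?_, by group⟩
    have hc' : y * x⁻¹ * τ⁻¹ = τ⁻¹ * (y * x⁻¹) := by
      have := congrArg (fun z => τ⁻¹ * z * τ⁻¹) hc
      simpa [mul_assoc] using this.symm
    calc y * x⁻¹ * (τ⁻¹ * x⁻¹⁻¹ * τ * x⁻¹)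
        = τ⁻¹ * (y * x⁻¹ * x * τ * x⁻¹) := by
          rw [show y * x⁻¹ * (τ⁻¹ * x⁻¹⁻¹ * τ * x⁻¹) = y * x⁻¹ * τ⁻¹ * (x * τ * x⁻¹) by group,
            hc']; group
      _ = τ⁻¹ * (y * τ * y⁻¹) * (y * x⁻¹) := by
          rw [show y * x⁻¹ * x * τ * x⁻¹ = y * τ * x⁻¹ by group]
          group
      _ = τ⁻¹ * (x * τ * x⁻¹) * (y * x⁻¹) := by rw [e2]
      _ = τ⁻¹ * x⁻¹⁻¹ * τ * x⁻¹ * (y * x⁻¹) := by group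
  · rintro ⟨c, hc, hv, rfl⟩
    have hci : τ⁻¹ * c = c * τ⁻¹ := by
      have := congrArg (fun z => τ⁻¹ * z * τ⁻¹) hc
      simpa [mul_assoc] using this
    constructor
    · rw [show τ⁻¹ * (c*x)⁻¹ * τ * (c*x) = τ⁻¹ * x⁻¹ * (c⁻¹ * τ * c) * x by group,
        show c⁻¹ * τ * c = c⁻¹ * (τ * c) by group, ← hc]
      group
    · symm
      calc τ⁻¹ * (c*x)⁻¹⁻¹ * τ * (c*x)⁻¹
          = τ⁻¹ * c * (x * τ * x⁻¹ * c⁻¹) := by group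
        _ = c * τ⁻¹ * (x * τ * x⁻¹ * c⁻¹) := by rw [hci]
        _ = c * (τ⁻¹ * x⁻¹⁻¹ * τ * x⁻¹) * c⁻¹ := by group
        _ = (τ⁻¹ * x⁻¹⁻¹ * τ * x⁻¹) * c * c⁻¹ := by rw [hv]
        _ = τ⁻¹ * x⁻¹⁻¹ * τ * x⁻¹ := by group
end

section
/- Let λ > 0, ε > 0 and n ≥ λ be real numbers. Let γ : [0,1] → ℂ be a continuously differentiable path with Re γ(t) ≥ 0 for all t ∈ [0,1], let k : [0,1] → ℂ satisfy |k(t)| ≤ ε for all t, and let φ : [0,1] → ℂ be differentiable with φ'(t) = −λ·e^{−((n−λ)·γ(t) + φ(t))}·k(t)·γ'(t) for all t ∈ [0,1]. Then for every t ∈ [0,1]: e^{Re φ(0)} − λ·ε·L(t) ≤ e^{Re φ(t)} ≤ e^{Re φ(0)} + λ·ε·L(t), where L(t) = ∫₀^t |γ'(s)| ds is the length of γ restricted to [0,t]. -/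
/-!
The substitution `ψ = exp φ` linearizes the equation: `ψ' = −λ e^{−(n−λ)γ} k γ'`, and since
`n − λ ≥ 0` and `Re γ ≥ 0` the exponential factor has modulus at most one, so `‖ψ'‖ ≤ λε‖γ'‖`.
Hence `‖ψ(t) − ψ(0)‖ ≤ λε L(t)`, and `‖ψ‖ = e^{Re φ}`.
-/

open Complex Real Set

theorem hasDerivAt_cexp_of_hasDerivAt_exp_neg_add_mul {φ : ℝ → ℂ} {a b : ℂ} {t : ℝ}
    (hφ : HasDerivAt φ (Complex.exp (-(a + φ t)) * b) t) :
    HasDerivAt (fun s => Complex.exp (φ s)) (Complex.exp (-a) * b) t := by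
  convert hφ.cexp using 1
  rw [neg_add, Complex.exp_add, Complex.exp_neg (φ t)]
  field_simp [Complex.exp_ne_zero]

theorem norm_cexp_neg_ofReal_mul_le_one {c : ℝ} {z : ℂ} (hc : 0 ≤ c) (hz : 0 ≤ z.re) :
    ‖Complex.exp (-(c * z))‖ ≤ 1 := by
  rw [Complex.norm_exp, Real.exp_le_one_iff, neg_re, re_ofReal_mul, neg_nonpos]
  exact mul_nonneg hc hz

theorem norm_neg_mul_cexp_neg_mul_le {lam c ε : ℝ} {z κ v : ℂ} (hlam : 0 ≤ lam) (hc : 0 ≤ c)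
    (hz : 0 ≤ z.re) (hκ : ‖κ‖ ≤ ε) :
    ‖-(lam : ℂ) * Complex.exp (-(c * z)) * κ * v‖ ≤ lam * ε * ‖v‖ := by
  rw [norm_mul, norm_mul, norm_mul, norm_neg, Complex.norm_real, Real.norm_of_nonneg hlam]
  have hexp := norm_cexp_neg_ofReal_mul_le_one hc hz
  have hε : 0 ≤ ε := (norm_nonneg κ).trans hκ
  calc lam * ‖Complex.exp (-(c * z))‖ * ‖κ‖ * ‖v‖ ≤ lam * 1 * ε * ‖v‖ := by gcongr
    _ = lam * ε * ‖v‖ := by ring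

theorem saddle_quasi_integral_estimate_general
    (lam ε n : ℝ) (hlam : 0 < lam) (hn : lam ≤ n)
    (γ γ' k φ : ℝ → ℂ)
    (hγ'c : ContinuousOn γ' (Icc (0:ℝ) 1))
    (hre : ∀ t ∈ Icc (0:ℝ) 1, 0 ≤ (γ t).re)
    (hk : ∀ t ∈ Icc (0:ℝ) 1, ‖k t‖ ≤ ε)
    (hφ : ∀ t ∈ Icc (0:ℝ) 1,
      HasDerivAt φ (-(lam : ℂ) * Complex.exp (-((((n : ℂ) - lam) * γ t) + φ t)) * k t * γ' t) t) :
    ∀ t ∈ Icc (0:ℝ) 1,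
      Real.exp (φ 0).re - lam * ε * (∫ s in (0:ℝ)..t, ‖γ' s‖) ≤
          Real.exp (φ t).re ∧
        Real.exp (φ t).re ≤
          Real.exp (φ 0).re + lam * ε * (∫ s in (0:ℝ)..t, ‖γ' s‖) := by
  intro t ht
  have hsub : Icc 0 t ⊆ Icc (0:ℝ) 1 := Icc_subset_Icc_right ht.2
  have hψ : ∀ s ∈ Icc (0:ℝ) 1, HasDerivAt (fun s => Complex.exp (φ s))
      (-(lam : ℂ) * Complex.exp (-((n - lam : ℝ) * γ s)) * k s * γ' s) s := fun s hs => by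
    convert hasDerivAt_cexp_of_hasDerivAt_exp_neg_add_mul (a := ((n : ℂ) - lam) * γ s)
      (b := -(lam : ℂ) * k s * γ' s) (by convert hφ s hs using 1; ring) using 1
    push_cast
    ring
  have hdisp : ‖Complex.exp (φ t) - Complex.exp (φ 0)‖ ≤ ∫ s in (0:ℝ)..t, lam * ε * ‖γ' s‖ :=
    norm_sub_le_integral_of_norm_deriv_le_of_le ht.1
      (fun s hs => (hψ s (hsub hs)).continuousAt.continuousWithinAt)
      (fun s hs => (hψ s (hsub (Ioo_subset_Icc_self hs))).differentiableAt.differentiableWithinAt)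
      (MeasureTheory.ae_of_all _ fun s hs => by
        have hs' := hsub (Ioo_subset_Icc_self hs)
        rw [(hψ s hs').deriv]
        exact norm_neg_mul_cexp_neg_mul_le hlam.le (sub_nonneg.2 hn) (hre s hs') (hk s hs'))
      (ContinuousOn.intervalIntegrable (by
        rw [uIcc_of_le ht.1]
        exact continuousOn_const.mul (hγ'c.mono hsub).norm))
  rw [intervalIntegral.integral_const_mul] at hdisp
  have hnorm := (abs_norm_sub_norm_le _ _).trans hdisp
  rw [Complex.norm_exp, Complex.norm_exp, abs_le] at hnorm
  constructor <;> linarith [hnorm.1, hnorm.2]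

/-- The a priori estimate for the quasi-first-integral `φ` of a prepared saddle foliation
along a path `γ` in `{Re z ≥ 0}`: if `φ' = −λ e^{−((n−λ)γ + φ)} k γ'` with `|k| ≤ ε` and
`n ≥ λ`, then `e^{Re φ(0)} − λε·L(t) ≤ e^{Re φ(t)} ≤ e^{Re φ(0)} + λε·L(t)` where `L(t)`
is the arc length of `γ` on `[0,t]`. -/
theorem saddle_quasi_integral_estimate
    (lam ε n : ℝ) (hlam : 0 < lam) (hε : 0 < ε) (hn : lam ≤ n)
    (γ γ' k φ : ℝ → ℂ)
    (hγ : ∀ t ∈ Icc (0:ℝ) 1, HasDerivAt γ (γ' t) t)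
    (hγ'c : ContinuousOn γ' (Icc (0:ℝ) 1))
    (hre : ∀ t ∈ Icc (0:ℝ) 1, 0 ≤ (γ t).re)
    (hk : ∀ t ∈ Icc (0:ℝ) 1, ‖k t‖ ≤ ε)
    (hφ : ∀ t ∈ Icc (0:ℝ) 1,
      HasDerivAt φ (-(lam : ℂ) * Complex.exp (-((((n : ℂ) - lam) * γ t) + φ t)) * k t * γ' t) t) :
    ∀ t ∈ Icc (0:ℝ) 1,
      Real.exp (φ 0).re - lam * ε * (∫ s in (0:ℝ)..t, ‖γ' s‖) ≤
          Real.exp (φ t).re ∧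
        Real.exp (φ t).re ≤
          Real.exp (φ 0).re + lam * ε * (∫ s in (0:ℝ)..t, ‖γ' s‖) :=
  saddle_quasi_integral_estimate_general lam ε n hlam hn γ γ' k φ hγ'c hre hk hφ
end

section
/- Let λ > 0, ε > 0, B > 0 be real numbers and n ≥ 1 an integer. Let γ : [0,1] → ℂ be a continuously differentiable path with Re γ(t) ≥ 0 for all t, let w : [0,1] → ℂ satisfy Re w(t) ≥ −log B for all t, let k : [0,1] → ℂ satisfy |k(t)| ≤ ε, and suppose φ = w + λγ is differentiable with φ'(t) = −λ·e^{−(n·γ(t) + w(t))}·k(t)·γ'(t) for all t ∈ [0,1]. Then e^{−λεB·L} ≤ |e^{−φ(1)}| / |e^{−φ(0)}| ≤ e^{λεB·L}, where L = ∫₀¹ |e^{−γ(t)}·γ'(t)| dt (the length of the projected path t ↦ e^{−γ(t)}). -/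
open Complex Real Set

/-! `φ = w + λγ` has derivative of norm at most `λεB‖e^{-γ}γ'‖`, because `n ≥ 1`, `Re γ ≥ 0`
and `e^{-Re w} ≤ B`. Integrating this pointwise bound (via the mean value inequality against the
primitive of the bound, which needs no integrability of `φ'`) gives `|Re φ(1) - Re φ(0)| ≤ λεB·L`,
and `|e^{-φ(1)}| / |e^{-φ(0)}| = e^{-(Re φ(1) - Re φ(0))}`. -/

theorem norm_sub_le_integral_of_norm_deriv_right_le {E : Type*} [NormedAddCommGroup E]
    [NormedSpace ℝ E] {f f' : ℝ → E} {g : ℝ → ℝ} {a b : ℝ} (hab : a ≤ b)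
    (hf : ContinuousOn f (Icc a b)) (hf' : ∀ x ∈ Ico a b, HasDerivWithinAt f (f' x) (Ici x) x)
    (hg : ContinuousOn g (Icc a b)) (bound : ∀ x ∈ Ico a b, ‖f' x‖ ≤ g x) :
    ‖f b - f a‖ ≤ ∫ x in a..b, g x := by
  -- extend `g` continuously to `ℝ` so that its primitive is differentiable everywhere
  set G := IccExtend hab ((Icc a b).domRestrict g)
  have hG : Continuous G := (continuousOn_iff_continuous_domRestrict.1 hg).Icc_extend'
  have hGg : EqOn G g (Icc a b) := fun x hx => IccExtend_of_mem hab _ hx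
  have key := image_norm_le_of_norm_deriv_right_le_deriv_boundary
    (f := fun x => f x - f a) (B := fun x => ∫ y in a..x, G y)
    (hf.sub continuousOn_const) (fun x hx => (hf' x hx).sub_const (f a)) (by simp)
    (fun x => (hG.integral_hasStrictDerivAt a x).hasDerivAt)
    (fun x hx => (bound x hx).trans_eq (hGg (Ico_subset_Icc_self hx)).symm) (right_mem_Icc.2 hab)
  rwa [intervalIntegral.integral_congr (hGg.mono (uIcc_of_le hab).subset)] at key

theorem norm_exp_neg_nat_mul_add_le {n : ℕ} (hn : 1 ≤ n) {z w : ℂ} {B : ℝ} (hB : 0 < B)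
    (hz : 0 ≤ z.re) (hw : -Real.log B ≤ w.re) :
    ‖exp (-(n * z + w))‖ ≤ ‖exp (-z)‖ * B := by
  have hn' : (1 : ℝ) ≤ n := by exact_mod_cast hn
  rw [norm_exp, norm_exp, ← Real.exp_log hB, ← Real.exp_add]
  gcongr
  simp only [neg_re, add_re, mul_re, natCast_re, natCast_im, zero_mul, sub_zero]
  nlinarith

theorem norm_saddle_rhs_le {lam ε B : ℝ} (hlam : 0 ≤ lam) {n : ℕ} (hn : 1 ≤ n) (hB : 0 < B)
    {z w k v : ℂ} (hz : 0 ≤ z.re) (hw : -Real.log B ≤ w.re) (hk : ‖k‖ ≤ ε) :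
    ‖-(lam : ℂ) * exp (-(n * z + w)) * k * v‖ ≤ lam * ε * B * ‖exp (-z) * v‖ := by
  have hexp := norm_exp_neg_nat_mul_add_le hn hB hz hw
  rw [norm_mul, norm_mul, norm_mul, norm_neg, norm_real, Real.norm_of_nonneg hlam, norm_mul]
  calc lam * ‖exp (-(n * z + w))‖ * ‖k‖ * ‖v‖
      ≤ lam * (‖exp (-z)‖ * B) * ε * ‖v‖ := by gcongr
    _ = lam * ε * B * (‖exp (-z)‖ * ‖v‖) := by ring

theorem norm_exp_neg_div_bounds_of_norm_sub_le (u v : ℂ) {C : ℝ} (h : ‖u - v‖ ≤ C) :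
    Real.exp (-C) ≤ ‖exp (-u)‖ / ‖exp (-v)‖ ∧ ‖exp (-u)‖ / ‖exp (-v)‖ ≤ Real.exp C := by
  have hre := abs_le.1 ((abs_re_le_norm (u - v)).trans h)
  rw [sub_re] at hre
  rw [norm_exp, norm_exp, ← Real.exp_sub, neg_re, neg_re]
  constructor <;> gcongr <;> linarith [hre.1, hre.2]

theorem saddle_quasi_integral_length_estimate_general
    (lam ε B : ℝ) (hlam : 0 < lam) (hB : 0 < B)
    (n : ℕ) (hn : 1 ≤ n)
    (γ γ' k w : ℝ → ℂ)
    (hγ : ∀ t ∈ Icc (0:ℝ) 1, HasDerivAt γ (γ' t) t)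
    (hγ'c : ContinuousOn γ' (Icc (0:ℝ) 1))
    (hre : ∀ t ∈ Icc (0:ℝ) 1, 0 ≤ (γ t).re)
    (hw : ∀ t ∈ Icc (0:ℝ) 1, -Real.log B ≤ (w t).re)
    (hk : ∀ t ∈ Icc (0:ℝ) 1, ‖k t‖ ≤ ε)
    (hφ : ∀ t ∈ Icc (0:ℝ) 1,
      HasDerivAt (fun s => w s + (lam : ℂ) * γ s)
        (-(lam : ℂ) * Complex.exp (-(((n : ℂ) * γ t) + w t)) * k t * γ' t) t) :
    Real.exp (-(lam * ε * B *
          (∫ t in (0:ℝ)..1, ‖Complex.exp (-γ t) * γ' t‖))) ≤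
        ‖Complex.exp (-(w 1 + (lam : ℂ) * γ 1))‖ /
          ‖Complex.exp (-(w 0 + (lam : ℂ) * γ 0))‖ ∧
      ‖Complex.exp (-(w 1 + (lam : ℂ) * γ 1))‖ /
          ‖Complex.exp (-(w 0 + (lam : ℂ) * γ 0))‖ ≤
        Real.exp (lam * ε * B *
          (∫ t in (0:ℝ)..1, ‖Complex.exp (-γ t) * γ' t‖)) := by
  have hγc : ContinuousOn γ (Icc 0 1) := fun t ht => (hγ t ht).continuousAt.continuousWithinAt
  have hdiff := norm_sub_le_integral_of_norm_deriv_right_le (f := fun s => w s + lam * γ s)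
    (g := fun t => lam * ε * B * ‖Complex.exp (-γ t) * γ' t‖) zero_le_one (fun t ht => (hφ t ht).continuousAt.continuousWithinAt)
    (fun t ht => (hφ t (Ico_subset_Icc_self ht)).hasDerivWithinAt)
    (by fun_prop)
    (fun t ht => have ht' := Ico_subset_Icc_self ht
      norm_saddle_rhs_le hlam.le hn hB (hre t ht') (hw t ht') (hk t ht'))
  rw [intervalIntegral.integral_const_mul] at hdiff
  exact norm_exp_neg_div_bounds_of_norm_sub_le _ _ hdiff

/-- The estimate for the growth of the quasi-first-integral `F = e^{−φ} = x^λ y` of a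
prepared saddle foliation in terms of the length `L` of the projected path `t ↦ e^{−γ(t)}`:
along a lift of the path, `|e^{−φ}|` changes by a factor at most `e^{λεB·L}`.  Here
`φ = w + λγ`, `Re γ ≥ 0`, `Re w ≥ −log B`, `|k| ≤ ε` and `φ' = −λ e^{−(nγ + w)} k γ'`
with `n ≥ 1` an integer. -/
theorem saddle_quasi_integral_length_estimate
    (lam ε B : ℝ) (hlam : 0 < lam) (hε : 0 < ε) (hB : 0 < B)
    (n : ℕ) (hn : 1 ≤ n)
    (γ γ' k w : ℝ → ℂ)
    (hγ : ∀ t ∈ Icc (0:ℝ) 1, HasDerivAt γ (γ' t) t)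
    (hγ'c : ContinuousOn γ' (Icc (0:ℝ) 1))
    (hre : ∀ t ∈ Icc (0:ℝ) 1, 0 ≤ (γ t).re)
    (hw : ∀ t ∈ Icc (0:ℝ) 1, -Real.log B ≤ (w t).re)
    (hk : ∀ t ∈ Icc (0:ℝ) 1, ‖k t‖ ≤ ε)
    (hφ : ∀ t ∈ Icc (0:ℝ) 1,
      HasDerivAt (fun s => w s + (lam : ℂ) * γ s)
        (-(lam : ℂ) * Complex.exp (-(((n : ℂ) * γ t) + w t)) * k t * γ' t) t) :
    Real.exp (-(lam * ε * B *
          (∫ t in (0:ℝ)..1, ‖Complex.exp (-γ t) * γ' t‖))) ≤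
        ‖Complex.exp (-(w 1 + (lam : ℂ) * γ 1))‖ /
          ‖Complex.exp (-(w 0 + (lam : ℂ) * γ 0))‖ ∧
      ‖Complex.exp (-(w 1 + (lam : ℂ) * γ 1))‖ /
          ‖Complex.exp (-(w 0 + (lam : ℂ) * γ 0))‖ ≤
        Real.exp (lam * ε * B *
          (∫ t in (0:ℝ)..1, ‖Complex.exp (-γ t) * γ' t‖)) :=
  saddle_quasi_integral_length_estimate_general lam ε B hlam hB n hn γ γ' k w hγ hγ'c hre hw hk hφ
end

section
/- Let a > 0 be a real number with a ≠ 1, let λ ≥ 0 be real, let k be a natural number, and let μ ∈ ℂ. If μ·a^k·z^k·e^{−λaz} = μ·a·z^k·e^{−λz} for all z ∈ ℂ with Re z > 0, then μ = 0 or (k = 1 and λ = 0). -/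
open Complex

/-- For `a > 0`, `a ≠ 1`, `λ ≥ 0`, `k ∈ ℕ`, `μ ∈ ℂ`: if
`μ·a^k·z^k·e^{−λaz} = μ·a·z^k·e^{−λz}` for all `z` with `Re z > 0`, then
`μ = 0` or (`k = 1` and `λ = 0`). -/
theorem centralizer_scaling_monomial (a lam : ℝ) (ha : 0 < a) (ha1 : a ≠ 1)
    (hlam : 0 ≤ lam) (k : ℕ) (μ : ℂ)
    (h : ∀ z : ℂ, 0 < z.re →
      μ * (a : ℂ) ^ k * z ^ k * Complex.exp (-(lam : ℂ) * a * z) =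
        μ * (a : ℂ) * z ^ k * Complex.exp (-(lam : ℂ) * z)) :
    μ = 0 ∨ (k = 1 ∧ lam = 0) := by
  by_cases hμ : μ = 0
  · exact Or.inl hμ
  right
  -- real version of the equation
  have key : ∀ t : ℝ, 0 < t →
      a ^ k * Real.exp (-lam * a * t) = a * Real.exp (-lam * t) := by
    intro t ht
    have hre : (0:ℝ) < ((t:ℂ)).re := by simpa using ht
    have heq := h (t:ℂ) hre
    have ht0 : (t:ℂ) ^ k ≠ 0 := pow_ne_zero _ (by exact_mod_cast ht.ne')
    have hcast : ((a:ℂ)) ^ k * Complex.exp (-(lam:ℂ) * a * t) =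
        (a:ℂ) * Complex.exp (-(lam:ℂ) * t) := by
      have h1 : μ * ((t:ℂ) ^ k *
          ((a:ℂ) ^ k * Complex.exp (-(lam:ℂ) * a * t))) =
          μ * ((t:ℂ) ^ k * ((a:ℂ) * Complex.exp (-(lam:ℂ) * t))) := by
        linear_combination heq
      exact mul_left_cancel₀ ht0 (mul_left_cancel₀ hμ h1)
    have hc2 : ((a ^ k * Real.exp (-lam * a * t) : ℝ) : ℂ) =
        ((a * Real.exp (-lam * t) : ℝ) : ℂ) := by
      have e1 : ((Real.exp (-lam * a * t) : ℝ) : ℂ) =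
          Complex.exp (-(lam:ℂ) * a * t) := by
        rw [Complex.ofReal_exp]; norm_num
      have e2 : ((Real.exp (-lam * t) : ℝ) : ℂ) =
          Complex.exp (-(lam:ℂ) * t) := by
        rw [Complex.ofReal_exp]; norm_num
      push_cast [e1, e2] at *
      exact hcast
    exact_mod_cast hc2
  -- λ = 0
  have hlam0 : lam = 0 := by
    by_contra hl
    have h1 := key 1 one_pos
    have h2 := key 2 two_pos
    have heq : Real.exp (-lam * 1 + -lam * a * 2) =
        Real.exp (-lam * 2 + -lam * a * 1) := by
      rw [Real.exp_add, Real.exp_add]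
      nlinarith [Real.exp_pos (-lam*a*1), Real.exp_pos (-lam*a*2),
        Real.exp_pos (-lam*1), Real.exp_pos (-lam*2), pow_pos ha k, ha]
    have := Real.exp_eq_exp.mp heq
    have hla : lam * (a - 1) = 0 := by linarith
    rcases mul_eq_zero.mp hla with h' | h'
    · exact hl h'
    · exact ha1 (by linarith)
  -- k = 1
  refine ⟨?_, hlam0⟩
  have h1 := key 1 one_pos
  rw [hlam0] at h1
  simp at h1
  have hlog : (k : ℝ) * Real.log a = Real.log a := by
    rw [← Real.log_pow, h1]
  have hlogne : Real.log a ≠ 0 := Real.log_ne_zero_of_pos_of_ne_one ha ha1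
  have : (k : ℝ) = 1 :=
    mul_right_cancel₀ hlogne (by linarith [hlog])
  exact_mod_cast this
end

section
/- There do not exist coprime positive integers p and q, a positive integer k, odd integers n₁ and n₂, and integers m₁ and m₂ such that q/p = n₁/(2k) + m₁ and p/q = n₂/(2k) + m₂ (as equalities of rational numbers). -/
/-- The arithmetic obstruction for exceptional (non-rigid) metabelian variation groups:
there are no coprime positive integers `p, q`, positive integer `k`, odd integers `n₁, n₂`
and integers `m₁, m₂` with `q/p = n₁/(2k) + m₁` and `p/q = n₂/(2k) + m₂`. -/
theorem no_exceptional_group :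
    ¬ ∃ (p q k : ℕ) (n₁ n₂ m₁ m₂ : ℤ),
      0 < p ∧ 0 < q ∧ Nat.Coprime p q ∧ 0 < k ∧ Odd n₁ ∧ Odd n₂ ∧
      (q : ℚ) / p = (n₁ : ℚ) / (2 * k) + m₁ ∧
      (p : ℚ) / q = (n₂ : ℚ) / (2 * k) + m₂ := by
  rintro ⟨p, q, k, n₁, n₂, m₁, m₂, hp, hq, -, hk, hn₁, hn₂, h1, h2⟩
  have hp' : (p : ℚ) ≠ 0 := by positivity
  have hq' : (q : ℚ) ≠ 0 := by positivity
  have hk' : (2 * (k : ℚ)) ≠ 0 := by positivity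
  have e1 : (q : ℚ) * (2 * k) = ((n₁ : ℚ) + 2 * k * m₁) * p := by
    field_simp at h1
    linarith
  have e2 : (p : ℚ) * (2 * k) = ((n₂ : ℚ) + 2 * k * m₂) * q := by
    field_simp at h2
    linarith
  have E1 : (q : ℤ) * (2 * k) = (n₁ + 2 * k * m₁) * p := by exact_mod_cast e1
  have E2 : (p : ℤ) * (2 * k) = (n₂ + 2 * k * m₂) * q := by exact_mod_cast e2
  have hpq : (0 : ℤ) < (p : ℤ) * q := by positivity
  have key : (n₁ + 2 * k * m₁) * (n₂ + 2 * k * m₂) = 4 * k ^ 2 := by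
    have := mul_left_cancel₀ (ne_of_gt hpq)
      (show ((p : ℤ) * q) * ((n₁ + 2 * k * m₁) * (n₂ + 2 * k * m₂))
          = ((p : ℤ) * q) * (4 * k ^ 2) by
        linear_combination (-(n₂ + 2 * (k:ℤ) * m₂) * q) * E1 - ((q:ℤ) * (2 * k)) * E2)
    exact this
  have hodd : Odd ((n₁ + 2 * k * m₁) * (n₂ + 2 * k * m₂)) :=
    (hn₁.add_even ((even_two_mul _).mul_right _)).mul
      (hn₂.add_even ((even_two_mul _).mul_right _))
  rw [key] at hodd
  obtain ⟨c, hc⟩ := hodd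
  omega
end
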